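/- arXiv:2203.09090 — 2 statements merged into one kernel-verified Lean document; each statement's English description precedes it below -/
import Mathlib

section
/- (Zoutendijk condition) Let L : M → ℝ be a smooth function on a Riemannian manifold M that is bounded below by L*, and suppose at each iterate Σᵢ ∈ M with conjugate direction Dᵢ ∈ T_{Σᵢ}M and step size αᵢ > 0 satisfying: (i) L(R_{Σᵢ}(αᵢDᵢ)) ≤ L(Σᵢ) + c₁αᵢ⟨grad L(Σᵢ), Dᵢ⟩ with 0 < c₁ < 1, (ii) (c₂ − 1)⟨grad L(Σᵢ), Dᵢ⟩ ≤ αᵢ K‖Dᵢ‖² for some constants c₂ ∈ (0,1), K > 0, and (iii) ⟨grad L(Σᵢ), Dᵢ⟩ < 0. Define Σᵢ₊₁ = R_{Σᵢ}(αᵢDᵢ). Then ∑ᵢ₌₁^∞ ⟨grad L(Σᵢ), Dᵢ⟩² / ‖Dᵢ‖² < ∞. -/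
/-!
The curvature condition bounds the step from below, `α ≥ (1 - c₂)(-g) / (K d²)`, so the
sufficient-decrease condition makes each step lower `L` by at least
`c₁ (1 - c₂) / K · g² / d²`. These decreases telescope, and `L` is bounded below, so the
partial sums of `g² / d²` are bounded by `K (L 0 - Lstar) / (c₁ (1 - c₂))`.
-/

open Finset

theorem sum_range_le_sub_of_le_sub {f L : ℕ → ℝ} (h : ∀ i, f i ≤ L i - L (i + 1)) (n : ℕ) :
    ∑ i ∈ range n, f i ≤ L 0 - L n := by
  rw [← sum_range_sub']
  exact sum_le_sum fun i _ => h i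

theorem summable_of_le_sub_of_forall_le {f L : ℕ → ℝ} {Lstar : ℝ} (hf : ∀ i, 0 ≤ f i)
    (h : ∀ i, f i ≤ L i - L (i + 1)) (hbdd : ∀ i, Lstar ≤ L i) : Summable f :=
  summable_of_sum_range_le (c := L 0 - Lstar) hf fun n =>
    (sum_range_le_sub_of_le_sub h n).trans (by linarith [hbdd n])

theorem mul_sq_div_sq_le_sub_of_wolfe {x y g d α c₁ c₂ K : ℝ} (hc₁ : 0 ≤ c₁) (hK : 0 < K)
    (hg : g ≤ 0) (hd : d ≠ 0) (hdecrease : y ≤ x + c₁ * α * g)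
    (hcurv : (c₂ - 1) * g ≤ α * K * d ^ 2) :
    c₁ * (1 - c₂) / K * (g ^ 2 / d ^ 2) ≤ x - y := by
  have hKd : 0 < K * d ^ 2 := by positivity
  have hα : (c₂ - 1) * g / (K * d ^ 2) ≤ α := by
    rw [div_le_iff₀ hKd]; linarith
  calc c₁ * (1 - c₂) / K * (g ^ 2 / d ^ 2) = c₁ * -g * ((c₂ - 1) * g / (K * d ^ 2)) := by
        field_simp; ring
    _ ≤ c₁ * -g * α := by gcongr; exact mul_nonneg hc₁ (neg_nonneg.mpr hg)
    _ ≤ x - y := by linarith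

theorem zoutendijk_condition_general (L g d α : ℕ → ℝ) (c₁ c₂ K Lstar : ℝ)
    (hc₁ : 0 < c₁) (hc₂' : c₂ < 1) (hK : 0 < K)
    (hg : ∀ i, g i < 0) (hd : ∀ i, 0 < d i)
    (hwolfe1 : ∀ i, L (i + 1) ≤ L i + c₁ * α i * g i)
    (hwolfe2 : ∀ i, (c₂ - 1) * g i ≤ α i * K * (d i)^2)
    (hbdd : ∀ i, Lstar ≤ L i) :
    Summable (fun i => (g i)^2 / (d i)^2) := by
  have hc : 0 < c₁ * (1 - c₂) / K := div_pos (mul_pos hc₁ (sub_pos.mpr hc₂')) hK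
  refine (summable_mul_left_iff hc.ne').mp (summable_of_le_sub_of_forall_le (L := L) ?_ ?_ hbdd)
  · intro i; positivity
  · exact fun i =>
      mul_sq_div_sq_le_sub_of_wolfe hc₁.le hK (hg i).le (hd i).ne' (hwolfe1 i) (hwolfe2 i)

theorem zoutendijk_condition (L g d α : ℕ → ℝ) (c₁ c₂ K Lstar : ℝ)
    (hc₁ : 0 < c₁) (hc₁' : c₁ < 1) (hc₂ : 0 < c₂) (hc₂' : c₂ < 1) (hK : 0 < K)
    (hg : ∀ i, g i < 0) (hd : ∀ i, 0 < d i) (hα : ∀ i, 0 < α i)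
    (hwolfe1 : ∀ i, L (i + 1) ≤ L i + c₁ * α i * g i)
    (hwolfe2 : ∀ i, (c₂ - 1) * g i ≤ α i * K * (d i)^2)
    (hbdd : ∀ i, Lstar ≤ L i) :
    Summable (fun i => (g i)^2 / (d i)^2) :=
  zoutendijk_condition_general L g d α c₁ c₂ K Lstar hc₁ hc₂' hK hg hd hwolfe1 hwolfe2 hbdd
end

section
/- (Fletcher–Reeves direction bound) Let (gᵢ)ᵢ≥1 be real numbers with g₁ = −G₁ where Gᵢ > 0, and suppose tᵢ = gᵢ/Gᵢ (with Gᵢ = ‖grad L(Σᵢ)‖²) satisfies the recursion bounds −1 + c₂·tᵢ ≤ tᵢ₊₁ ≤ −1 − c₂·tᵢ for all i ≥ 1 with 0 < c₂ < 1/2. Then for every i ≥ 1: −1/(1 − c₂) ≤ tᵢ ≤ (2c₂ − 1)/(1 − c₂). -/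
/-! `-1 / (1 - c₂)` is the fixed point of `x ↦ -1 + c₂ * x`, which is monotone since `c₂ ≥ 0`, so
the lower half of the recursion keeps every `tᵢ` above it. Feeding this lower bound into the
upper half gives `tᵢ₊₁ ≤ -1 - c₂ * (-1 / (1 - c₂)) = (2 * c₂ - 1) / (1 - c₂)`. -/

theorem le_of_affine_le_succ {α : Type*} [Semiring α] [PartialOrder α] [IsOrderedRing α]
    {t : ℕ → α} {a c L : α} (hc : 0 ≤ c) (hL : a + c * L = L) (h0 : L ≤ t 0)
    (hrec : ∀ i, a + c * t i ≤ t (i + 1)) (i : ℕ) : L ≤ t i := by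
  induction i with
  | zero => exact h0
  | succ i ih =>
    calc L = a + c * L := hL.symm
      _ ≤ a + c * t i := by gcongr
      _ ≤ t (i + 1) := hrec i

theorem fletcher_reeves_direction_bound (t : ℕ → ℝ) (c₂ : ℝ)
    (hc₂ : 0 < c₂) (hc₂' : c₂ < 1/2)
    (h0 : t 0 = -1)
    (hrec : ∀ i, -1 + c₂ * t i ≤ t (i + 1) ∧ t (i + 1) ≤ -1 - c₂ * t i) :
    ∀ i, -1 / (1 - c₂) ≤ t i ∧ t i ≤ (2 * c₂ - 1) / (1 - c₂) := by
  have hpos : 0 < 1 - c₂ := by linarith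
  have fixed : -1 + c₂ * (-1 / (1 - c₂)) = -1 / (1 - c₂) := by field_simp; ring
  have reflected : -1 - c₂ * (-1 / (1 - c₂)) = (2 * c₂ - 1) / (1 - c₂) := by field_simp; ring
  have lower0 : -1 / (1 - c₂) ≤ -1 := by rw [div_le_iff₀ hpos]; linarith
  have upper0 : -1 ≤ (2 * c₂ - 1) / (1 - c₂) := by rw [le_div_iff₀ hpos]; linarith
  have lower : ∀ i, -1 / (1 - c₂) ≤ t i :=
    le_of_affine_le_succ hc₂.le fixed (h0 ▸ lower0) fun i => (hrec i).1
  intro i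
  refine ⟨lower i, ?_⟩
  cases i with
  | zero => exact h0 ▸ upper0
  | succ i =>
    calc t (i + 1) ≤ -1 - c₂ * t i := (hrec i).2
      _ ≤ -1 - c₂ * (-1 / (1 - c₂)) := by gcongr; exact lower i
      _ = (2 * c₂ - 1) / (1 - c₂) := reflected
end
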